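/- arXiv:1907.00845 — 4 statements merged into one kernel-verified Lean document; each statement's English description precedes it below -/
import Mathlib

section
/- For all ψ, φ ∈ [0, π/2], arccos(cos ψ · cos φ) ≤ sqrt(ψ² + φ²). -/
/-! Since `tan y / y` increases on `(0, π/2)`, the function `x ↦ log (cos √x)`, whose derivative is
`-(tan √x / √x) / 2`, is concave on `[0, (π/2)²)`. It vanishes at `0`, so it is subadditive there:
`cos √(ψ² + φ²) ≤ cos ψ * cos φ` whenever `√(ψ² + φ²) < π/2`, and `arccos` is antitone. When
`√(ψ² + φ²) ≥ π/2` the bound is trivial since `arccos` of a nonnegative number is at most `π/2`. -/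

open Real Set

theorem ConcaveOn.map_add_le {S : Set ℝ} {f : ℝ → ℝ} (hf : ConcaveOn ℝ S f) (h0 : 0 ∈ S)
    (hf0 : 0 ≤ f 0) {s t : ℝ} (hs : 0 ≤ s) (ht : 0 ≤ t) (hst : s + t ∈ S) :
    f (s + t) ≤ f s + f t := by
  rcases (add_nonneg hs ht).eq_or_lt with hu | hu
  · obtain ⟨rfl, rfl⟩ : s = 0 ∧ t = 0 := ⟨by linarith, by linarith⟩
    simpa using hf0
  have chord : ∀ a, 0 ≤ a → a ≤ s + t → a / (s + t) * f (s + t) ≤ f a := by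
    intro a ha ha'
    have h := hf.2 h0 hst (sub_nonneg.2 ((div_le_one hu).2 ha')) (div_nonneg ha hu.le)
      (sub_add_cancel 1 _)
    simp only [smul_eq_mul, mul_zero, zero_add] at h
    rw [div_mul_cancel₀ a hu.ne'] at h
    linarith [mul_nonneg (sub_nonneg.2 ((div_le_one hu).2 ha')) hf0]
  calc f (s + t) = s / (s + t) * f (s + t) + t / (s + t) * f (s + t) := by
        rw [← add_mul, ← add_div, div_self hu.ne', one_mul]
    _ ≤ f s + f t := add_le_add (chord s hs (by linarith)) (chord t ht (by linarith))

theorem monotoneOn_tan_div_self : MonotoneOn (fun x ↦ tan x / x) (Ioo 0 (π / 2)) := by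
  have hderiv : ∀ x ∈ Ioo 0 (π / 2), HasDerivAt (fun x ↦ tan x / x)
      ((1 / cos x ^ 2 * x - tan x * 1) / x ^ 2) x := fun x hx ↦
    (hasDerivAt_tan (cos_pos_of_mem_Ioo ⟨by linarith [hx.1, pi_pos], hx.2⟩).ne').div (hasDerivAt_id x)
      hx.1.ne'
  refine monotoneOn_of_hasDerivWithinAt_nonneg (convex_Ioo _ _)
    (fun x hx ↦ (hderiv x hx).continuousAt.continuousWithinAt)
    (fun x hx ↦ (hderiv x (interior_subset hx)).hasDerivWithinAt) fun x hx ↦ ?_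
  rw [interior_Ioo] at hx
  have hcos : 0 < cos x := cos_pos_of_mem_Ioo ⟨by linarith [hx.1, pi_pos], hx.2⟩
  have hsin : 0 ≤ sin x := sin_nonneg_of_nonneg_of_le_pi hx.1.le (by linarith [hx.2, pi_pos])
  have : sin x * cos x ≤ x := (mul_le_of_le_one_right hsin (cos_le_one x)).trans (sin_le hx.1.le)
  refine div_nonneg (sub_nonneg.2 ?_) (sq_nonneg x)
  rw [tan_eq_sin_div_cos, mul_one, div_le_iff₀ hcos]
  field_simp
  linarith

theorem cos_sqrt_pos {x : ℝ} (hx : x < (π / 2) ^ 2) : 0 < cos √x :=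
  cos_pos_of_mem_Ioo ⟨by linarith [sqrt_nonneg x, pi_pos], (sqrt_lt' (by positivity)).2 hx⟩

-- The interval is open at the right end: there `cos √x = 0` and `log 0 = 0` is a junk value.
theorem concaveOn_log_cos_sqrt : ConcaveOn ℝ (Ico 0 ((π / 2) ^ 2)) fun x ↦ log (cos √x) := by
  have hderiv : ∀ x ∈ Ioo 0 ((π / 2) ^ 2),
      HasDerivAt (fun x ↦ log (cos √x)) (-(tan √x / √x) / 2) x := by
    intro x hx
    have h := ((hasDerivAt_sqrt hx.1.ne').cos).log (cos_sqrt_pos hx.2).ne'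
    convert h using 1
    rw [tan_eq_sin_div_cos]
    field_simp
  refine AntitoneOn.concaveOn_of_deriv (convex_Ico _ _) ?_ ?_ ?_
  · exact ContinuousOn.log (by fun_prop) fun x hx ↦ (cos_sqrt_pos hx.2).ne'
  · rw [interior_Ico]
    exact fun x hx ↦ (hderiv x hx).differentiableAt.differentiableWithinAt
  rw [interior_Ico]
  intro x hx y hy hxy
  have hmem : ∀ z ∈ Ioo 0 ((π / 2) ^ 2), √z ∈ Ioo 0 (π / 2) := fun z hz ↦
    ⟨sqrt_pos.2 hz.1, (sqrt_lt' (by positivity)).2 hz.2⟩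
  rw [(hderiv x hx).deriv, (hderiv y hy).deriv]
  have := monotoneOn_tan_div_self (hmem x hx) (hmem y hy) (sqrt_le_sqrt hxy)
  linarith

theorem cos_sqrt_add_le_mul {s t : ℝ} (hs : 0 ≤ s) (ht : 0 ≤ t) (hst : s + t < (π / 2) ^ 2) :
    cos √(s + t) ≤ cos √s * cos √t := by
  have hcs : 0 < cos √s := cos_sqrt_pos (by linarith)
  have hct : 0 < cos √t := cos_sqrt_pos (by linarith)
  have h := concaveOn_log_cos_sqrt.map_add_le ⟨le_rfl, by positivity⟩ (by simp) hs ht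
    ⟨by positivity, hst⟩
  rw [← log_mul hcs.ne' hct.ne'] at h
  exact (log_le_log_iff (cos_sqrt_pos hst) (mul_pos hcs hct)).1 h

theorem arccos_cos_mul_cos_le (ψ φ : ℝ)
    (hψ : ψ ∈ Set.Icc (0:ℝ) (Real.pi / 2)) (hφ : φ ∈ Set.Icc (0:ℝ) (Real.pi / 2)) :
    Real.arccos (Real.cos ψ * Real.cos φ) ≤ Real.sqrt (ψ ^ 2 + φ ^ 2) := by
  have hcos : ∀ θ ∈ Icc 0 (π / 2), 0 ≤ cos θ := fun θ hθ ↦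
    cos_nonneg_of_mem_Icc ⟨by linarith [hθ.1, pi_pos], hθ.2⟩
  rcases le_or_gt (π / 2) √(ψ ^ 2 + φ ^ 2) with hr | hr
  · exact (arccos_le_pi_div_two.2 (mul_nonneg (hcos ψ hψ) (hcos φ hφ))).trans hr
  have key := cos_sqrt_add_le_mul (sq_nonneg ψ) (sq_nonneg φ) ((sqrt_lt' (by positivity)).1 hr)
  rw [sqrt_sq hψ.1, sqrt_sq hφ.1] at key
  calc arccos (cos ψ * cos φ) ≤ arccos (cos √(ψ ^ 2 + φ ^ 2)) := arccos_le_arccos key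
    _ = √(ψ ^ 2 + φ ^ 2) := arccos_cos (sqrt_nonneg _) (by linarith [pi_pos])
end

section
/- For all t, ψ with 0 ≤ ψ ≤ t ≤ π/2, arccos(cos t / cos ψ) ≥ sqrt(t² − ψ²). -/
/-!
Put `u = arccos (cos t / cos ψ)`, so that `cos t = cos ψ cos u`. The function `x ↦ cos √x` is
convex on `[0, π²]`: its second derivative has the sign of `sin s - s cos s ≥ 0`, `s = √x`.
Evaluated at the midpoint of `(ψ - u)²` and `(ψ + u)²` this gives
`cos √(ψ² + u²) ≤ (cos (ψ - u) + cos (ψ + u)) / 2 = cos t`, and as `cos` is decreasing on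
`[0, π]`, `t ≤ √(ψ² + u²)`, i.e. `t² - ψ² ≤ u²`.
-/

open Real Set

lemma Real.mul_cos_le_sin {x : ℝ} (h0 : 0 ≤ x) (hπ : x ≤ π) : x * cos x ≤ sin x := by
  rcases lt_or_ge x (π / 2) with hx | hx
  · have hcos : 0 < cos x := cos_pos_of_mem_Ioo ⟨by linarith [pi_pos], hx⟩
    have htan := le_tan h0 hx
    rwa [tan_eq_sin_div_cos, le_div_iff₀ hcos] at htan
  · have hcos : cos x ≤ 0 := cos_nonpos_of_pi_div_two_le_of_le hx (by linarith [pi_pos])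
    have hsin : 0 ≤ sin x := sin_nonneg_of_nonneg_of_le_pi h0 hπ
    nlinarith

lemma Real.hasDerivAt_cos_sqrt {x : ℝ} (hx : 0 < x) :
    HasDerivAt (fun y => cos √y) (-sin √x / (2 * √x)) x := by
  refine ((hasDerivAt_cos √x).comp x (hasDerivAt_sqrt hx.ne')).congr_deriv ?_
  ring

lemma Real.hasDerivAt_neg_sin_sqrt_div {x : ℝ} (hx : 0 < x) :
    HasDerivAt (fun y => -sin √y / (2 * √y))
      ((sin √x - √x * cos √x) / (4 * x * √x)) x := by
  have hsqrt := hasDerivAt_sqrt hx.ne'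
  have hs : 0 < √x := sqrt_pos.2 hx
  refine (((hasDerivAt_sin √x).comp x hsqrt).neg.div (hsqrt.const_mul 2)
    (by positivity)).congr_deriv ?_
  have hsq : √x ^ 2 = x := sq_sqrt hx.le
  simp only [Pi.neg_apply, Function.comp_apply]
  field_simp
  linear_combination (4 * cos √x * √x - 4 * sin √x) * hsq

lemma Real.convexOn_cos_sqrt : ConvexOn ℝ (Icc 0 (π ^ 2)) (fun x => cos √x) := by
  refine convexOn_of_hasDerivWithinAt2_nonneg (convex_Icc _ _)
    (f' := fun x => -sin √x / (2 * √x))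
    (f'' := fun x => (sin √x - √x * cos √x) / (4 * x * √x))
    (by fun_prop) ?_ ?_ ?_ <;> rw [interior_Icc] <;> rintro x ⟨hx0, hxπ⟩
  · exact (hasDerivAt_cos_sqrt hx0).hasDerivWithinAt
  · exact (hasDerivAt_neg_sin_sqrt_div hx0).hasDerivWithinAt
  · have hsπ : √x ≤ π := sqrt_le_left pi_pos.le |>.2 hxπ.le
    have hmul := mul_cos_le_sin (sqrt_nonneg x) hsπ
    have hs : 0 < √x := sqrt_pos.2 hx0
    exact div_nonneg (by linarith) (by positivity)

lemma Real.cos_sqrt_sq_add_sq_le {a b : ℝ} (h : |a| + |b| ≤ π) :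
    cos √(a ^ 2 + b ^ 2) ≤ cos a * cos b := by
  have hmem : ∀ c, |c| ≤ π → c ^ 2 ∈ Icc 0 (π ^ 2) := fun c hc =>
    ⟨sq_nonneg c, sq_le_sq' (abs_le.1 hc).1 (abs_le.1 hc).2⟩
  have hmid := convexOn_cos_sqrt.2 (hmem (a - b) ((abs_sub _ _).trans h))
    (hmem (a + b) ((abs_add_le _ _).trans h)) (by norm_num : (0 : ℝ) ≤ 1 / 2)
    (by norm_num : (0 : ℝ) ≤ 1 / 2) (by norm_num)
  simp only [smul_eq_mul, sqrt_sq_eq_abs, cos_abs] at hmid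
  calc cos √(a ^ 2 + b ^ 2) = cos √(1 / 2 * (a - b) ^ 2 + 1 / 2 * (a + b) ^ 2) := by ring_nf
    _ ≤ 1 / 2 * cos (a - b) + 1 / 2 * cos (a + b) := hmid
    _ = cos a * cos b := by rw [cos_sub, cos_add]; ring

lemma Real.sq_le_sq_add_sq_of_cos_mul_cos_le {a b t : ℝ} (ha : 0 ≤ a) (hb : 0 ≤ b)
    (hab : a + b ≤ π) (ht : 0 ≤ t) (htπ : t ≤ π) (h : cos a * cos b ≤ cos t) :
    t ^ 2 ≤ a ^ 2 + b ^ 2 := by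
  have hsπ : √(a ^ 2 + b ^ 2) ≤ π := (sqrt_le_left pi_pos.le).2 (by nlinarith)
  have hcos : cos √(a ^ 2 + b ^ 2) ≤ cos t :=
    (cos_sqrt_sq_add_sq_le (by rwa [abs_of_nonneg ha, abs_of_nonneg hb])).trans h
  have hle : t ≤ √(a ^ 2 + b ^ 2) :=
    (strictAntiOn_cos.le_iff_ge ⟨sqrt_nonneg _, hsπ⟩ ⟨ht, htπ⟩).1 hcos
  exact (le_sqrt ht (by positivity)).1 hle

lemma Real.mul_cos_arccos_div {x y : ℝ} (h : |x| ≤ y) : y * cos (arccos (x / y)) = x := by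
  rcases (abs_nonneg x).trans h |>.eq_or_lt with hy | hy
  · -- `y = 0` forces `x = 0`, so the junk value `x / 0 = 0` does no harm
    subst hy
    simpa [eq_comm] using h
  · have hxy : |x / y| ≤ 1 := by rwa [abs_div, abs_of_pos hy, div_le_one hy]
    rw [abs_le] at hxy
    rw [cos_arccos hxy.1 hxy.2]
    field_simp

theorem arccos_cos_div_cos_ge (t ψ : ℝ) (h0 : 0 ≤ ψ) (h1 : ψ ≤ t) (h2 : t ≤ Real.pi / 2) :
    Real.sqrt (t ^ 2 - ψ ^ 2) ≤ Real.arccos (Real.cos t / Real.cos ψ) := by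
  have hcos_t : 0 ≤ cos t := cos_nonneg_of_mem_Icc ⟨by linarith [pi_pos], h2⟩
  have hcos_le : cos t ≤ cos ψ := cos_le_cos_of_nonneg_of_le_pi h0 (by linarith [pi_pos]) h1
  set u := arccos (cos t / cos ψ)
  have hu0 : 0 ≤ u := arccos_nonneg _
  have hu : u ≤ π / 2 := arccos_le_pi_div_two.2 (div_nonneg hcos_t (hcos_t.trans hcos_le))
  have hprod : cos ψ * cos u = cos t := mul_cos_arccos_div (by rwa [abs_of_nonneg hcos_t])
  have hsq : t ^ 2 ≤ ψ ^ 2 + u ^ 2 :=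
    sq_le_sq_add_sq_of_cos_mul_cos_le h0 hu0 (by linarith) (h0.trans h1)
      (by linarith [pi_pos]) hprod.le
  exact (sqrt_le_left hu0).2 (by linarith)
end

section
/- For every c > 1, let r* = sqrt(4c²/((c²+1)(3c²−1))). Then 1/c < r* < 1, and at r = r* the two bounds coincide: 2r²c²(1 − sqrt(1 − 1/(r²c²))) = (2/3)(r² + 1 + sqrt(r⁴ − r² + 1)) = 4c²/(3c² − 1). -/
/-!
Write `s = 4c² / ((c² + 1)(3c² − 1))` for `r*²`. Both radicands become perfect squares at `r² = s`:
`1 − 1/(s c²) = ((c² − 1)/(2c²))²` and `s² − s + 1 = ((3c⁴ + 1)/((c² + 1)(3c² − 1)))²`,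
so both square roots are rational in `c` and each bound collapses to `4c²/(3c² − 1)`.
After clearing denominators, `1/c² < s` is `0 < (c² − 1)²` and `s < 1` is `0 < (3c² + 1)(c² − 1)`.
-/

noncomputable def hardestRadiusSq (c : ℝ) : ℝ := 4 * c ^ 2 / ((c ^ 2 + 1) * (3 * c ^ 2 - 1))

variable {c : ℝ}

lemma hardestRadiusSq_pos (hc : 1 < 3 * c ^ 2) (hc0 : c ≠ 0) : 0 < hardestRadiusSq c := by
  have : 0 < 3 * c ^ 2 - 1 := by linarith
  unfold hardestRadiusSq; positivity

lemma one_div_sq_lt_hardestRadiusSq (hc : 1 < c ^ 2) : 1 / c ^ 2 < hardestRadiusSq c := by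
  unfold hardestRadiusSq
  rw [div_lt_div_iff₀ (by positivity) (by nlinarith)]
  nlinarith [sq_nonneg (c ^ 2 - 1)]

lemma hardestRadiusSq_lt_one (hc : 1 < c ^ 2) : hardestRadiusSq c < 1 := by
  unfold hardestRadiusSq
  rw [div_lt_one (by nlinarith)]
  nlinarith [sq_nonneg (c ^ 2 - 1)]

lemma one_sub_inv_hardestRadiusSq_mul_sq (hc : 1 < 3 * c ^ 2) (hc0 : c ≠ 0) :
    1 - 1 / (hardestRadiusSq c * c ^ 2) = ((c ^ 2 - 1) / (2 * c ^ 2)) ^ 2 := by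
  have : 3 * c ^ 2 - 1 ≠ 0 := by linarith
  unfold hardestRadiusSq; field_simp; ring

lemma hardestRadiusSq_sq_sub_add_one (hc : 1 < 3 * c ^ 2) :
    hardestRadiusSq c ^ 2 - hardestRadiusSq c + 1
      = ((3 * c ^ 4 + 1) / ((c ^ 2 + 1) * (3 * c ^ 2 - 1))) ^ 2 := by
  have : c ^ 2 * 3 - 1 ≠ 0 := by linarith
  unfold hardestRadiusSq; field_simp; ring

lemma first_bound_at_hardestRadiusSq (hc : 1 ≤ c ^ 2) :
    2 * hardestRadiusSq c * c ^ 2 * (1 - Real.sqrt (1 - 1 / (hardestRadiusSq c * c ^ 2)))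
      = 4 * c ^ 2 / (3 * c ^ 2 - 1) := by
  have hc0 : c ≠ 0 := by rintro rfl; norm_num at hc
  have h3 : 3 * c ^ 2 - 1 ≠ 0 := by linarith
  rw [one_sub_inv_hardestRadiusSq_mul_sq (by linarith) hc0,
    Real.sqrt_sq (div_nonneg (by linarith) (by positivity))]
  unfold hardestRadiusSq; field_simp; ring

lemma second_bound_at_hardestRadiusSq (hc : 1 < 3 * c ^ 2) :
    (2 / 3) * (hardestRadiusSq c + 1 + Real.sqrt (hardestRadiusSq c ^ 2 - hardestRadiusSq c + 1))
      = 4 * c ^ 2 / (3 * c ^ 2 - 1) := by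
  have h3 : 0 < 3 * c ^ 2 - 1 := by linarith
  rw [hardestRadiusSq_sq_sub_add_one hc, Real.sqrt_sq (by positivity)]
  unfold hardestRadiusSq; field_simp; ring

theorem hardest_radius (c r : ℝ) (hc : 1 < c)
    (hr : r = Real.sqrt (4 * c ^ 2 / ((c ^ 2 + 1) * (3 * c ^ 2 - 1)))) :
    1 / c < r ∧ r < 1 ∧
    2 * r ^ 2 * c ^ 2 * (1 - Real.sqrt (1 - 1 / (r ^ 2 * c ^ 2))) = 4 * c ^ 2 / (3 * c ^ 2 - 1) ∧
    (2 / 3) * (r ^ 2 + 1 + Real.sqrt (r ^ 4 - r ^ 2 + 1)) = 4 * c ^ 2 / (3 * c ^ 2 - 1) := by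
  have hc2 : 1 < c ^ 2 := by nlinarith
  have hr2 : r ^ 2 = hardestRadiusSq c := by
    rw [hr]; exact Real.sq_sqrt (hardestRadiusSq_pos (by linarith) (by positivity)).le
  have hr0 : 0 ≤ r := hr ▸ Real.sqrt_nonneg _
  refine ⟨?_, ?_, ?_, ?_⟩
  · refine lt_of_pow_lt_pow_left₀ 2 hr0 ?_
    rw [hr2, div_pow, one_pow]
    exact one_div_sq_lt_hardestRadiusSq hc2
  · refine lt_of_pow_lt_pow_left₀ 2 zero_le_one ?_
    rw [hr2, one_pow]
    exact hardestRadiusSq_lt_one hc2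
  · rw [hr2]
    exact first_bound_at_hardestRadiusSq hc2.le
  · rw [show r ^ 4 = (r ^ 2) ^ 2 by ring, hr2]
    exact second_bound_at_hardestRadiusSq (by linarith)
end

section
/- Let d ≥ 2 and t ∈ (0, 1]. If ψ = 2/sqrt(d) and t = 1 − 1/d, then for sufficiently large d, (ψ²/(1 − 2·sqrt(t² − ψ²) + t²))^{(d−2)/2} ≥ e^{−3/2}·(1 + o(1)); in particular there exists d₀ and a constant c > 0 such that for all d ≥ d₀ this quantity is at least c. -/
/-!
Write `u = 1/d`, so `ψ² = 4u`, `t = 1 - u`, and let `s = √(t² - ψ²)`. The denominator is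
`ψ² + (1 - s)²`, and `1 - s = (6u - u²)/(1 + s) ≤ 24u/7` once `s ≥ 3/4` (true for `u ≤ 7/96`).
Hence the base lies between `4u/(4u + 12u²) = (1 + 3/d)⁻¹` and `1`, and
`(1 + 3/d)^(-(d-2)/2) ≥ exp(-3(d-2)/(2d)) ≥ exp(-3/2)` by `1 + x ≤ eˣ`.
The upper bound `1` makes the sequence bounded, so its `liminf` is the genuine one.
-/

open Real Filter

lemma one_sub_two_mul_sqrt_add_sq {a t : ℝ} (h : a ≤ t ^ 2) :
    1 - 2 * √(t ^ 2 - a) + t ^ 2 = a + (1 - √(t ^ 2 - a)) ^ 2 := by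
  have hs := sq_sqrt (sub_nonneg.2 h)
  linear_combination -hs

lemma one_sub_sqrt_sq_le {u : ℝ} (hu0 : 0 ≤ u) (hu : u ≤ 7 / 96) :
    (1 - √((1 - u) ^ 2 - 4 * u)) ^ 2 ≤ 12 * u ^ 2 := by
  set s := √((1 - u) ^ 2 - 4 * u)
  have hs_sq : s ^ 2 = 1 - 6 * u + u ^ 2 := by rw [sq_sqrt (by nlinarith)]; ring
  have hs0 : 0 ≤ s := sqrt_nonneg _
  have hs_le : s ≤ 1 := by nlinarith
  have hs_ge : 3 / 4 ≤ s := by nlinarith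
  have h_one_sub : 1 - s ≤ 24 / 7 * u := by nlinarith
  nlinarith

lemma div_one_sub_two_mul_sqrt_mem_Icc {u : ℝ} (hu0 : 0 < u) (hu : u ≤ 7 / 96) :
    4 * u / (1 - 2 * √((1 - u) ^ 2 - 4 * u) + (1 - u) ^ 2) ∈ Set.Icc (1 + 3 * u)⁻¹ 1 := by
  rw [one_sub_two_mul_sqrt_add_sq (by nlinarith)]
  have hsq := one_sub_sqrt_sq_le hu0.le hu
  constructor
  · calc (1 + 3 * u)⁻¹ = 4 * u / (4 * u + 12 * u ^ 2) := by field_simp; ring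
      _ ≤ _ := by gcongr
  · exact div_le_one_of_le₀ (le_add_of_nonneg_right (sq_nonneg _)) (by positivity)

lemma exp_neg_mul_le_inv_one_add_rpow {b y : ℝ} (hb : 0 ≤ b) (hy : 0 ≤ y) :
    exp (-(b * y)) ≤ (1 + b)⁻¹ ^ y := by
  rw [inv_rpow (by positivity), exp_neg, exp_mul]
  gcongr
  linarith [add_one_le_exp b]

noncomputable def phaseBase (d : ℕ) : ℝ :=
  (2 / √d) ^ 2 / (1 - 2 * √((1 - 1 / (d:ℝ)) ^ 2 - (2 / √d) ^ 2) + (1 - 1 / (d:ℝ)) ^ 2)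

lemma phaseBase_mem_Icc {d : ℕ} (hd : 14 ≤ d) : phaseBase d ∈ Set.Icc (1 + 3 / (d:ℝ))⁻¹ 1 := by
  have hd' : (14:ℝ) ≤ d := by exact_mod_cast hd
  have hψ : (2 / √(d:ℝ)) ^ 2 = 4 * (1 / d) := by rw [div_pow, sq_sqrt (by positivity)]; ring
  rw [phaseBase, hψ, show 3 / (d:ℝ) = 3 * (1 / d) by ring]
  exact div_one_sub_two_mul_sqrt_mem_Icc (by positivity)
    (by rw [div_le_iff₀ (by positivity)]; linarith)

lemma exp_neg_three_halves_le_phaseBase_rpow {d : ℕ} (hd : 14 ≤ d) :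
    exp (-(3:ℝ) / 2) ≤ phaseBase d ^ (((d:ℝ) - 2) / 2) := by
  have hd' : (14:ℝ) ≤ d := by exact_mod_cast hd
  calc exp (-(3:ℝ) / 2) ≤ exp (-(3 / (d:ℝ) * (((d:ℝ) - 2) / 2))) := by
        gcongr
        rw [show 3 / (d:ℝ) * (((d:ℝ) - 2) / 2) = 3 / 2 - 3 / d by field_simp]
        linarith [show (0:ℝ) < 3 / d by positivity]
    _ ≤ (1 + 3 / (d:ℝ))⁻¹ ^ (((d:ℝ) - 2) / 2) :=
        exp_neg_mul_le_inv_one_add_rpow (by positivity) (by linarith)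
    _ ≤ phaseBase d ^ (((d:ℝ) - 2) / 2) := by
        gcongr
        · linarith
        · exact (phaseBase_mem_Icc hd).1

lemma phaseBase_rpow_le_one {d : ℕ} (hd : 14 ≤ d) : phaseBase d ^ (((d:ℝ) - 2) / 2) ≤ 1 := by
  have hd' : (14:ℝ) ≤ d := by exact_mod_cast hd
  obtain ⟨hlo, hhi⟩ := phaseBase_mem_Icc hd
  exact rpow_le_one ((inv_pos.2 (by positivity)).le.trans hlo) hhi (by linarith)

theorem phase_step_integrand_bound :
    Real.exp (-(3:ℝ)/2) ≤
      Filter.liminf (fun d : ℕ =>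
        ((2 / Real.sqrt d) ^ 2
            / (1 - 2 * Real.sqrt ((1 - 1 / (d:ℝ)) ^ 2 - (2 / Real.sqrt d) ^ 2)
              + (1 - 1 / (d:ℝ)) ^ 2)) ^ (((d:ℝ) - 2) / 2)) Filter.atTop ∧
    ∃ d₀ : ℕ, ∃ c : ℝ, 0 < c ∧ ∀ d : ℕ, d₀ ≤ d →
      c ≤ ((2 / Real.sqrt d) ^ 2
            / (1 - 2 * Real.sqrt ((1 - 1 / (d:ℝ)) ^ 2 - (2 / Real.sqrt d) ^ 2)
              + (1 - 1 / (d:ℝ)) ^ 2)) ^ (((d:ℝ) - 2) / 2) := by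
  have hupper : ∀ᶠ d : ℕ in atTop, phaseBase d ^ (((d:ℝ) - 2) / 2) ≤ 1 :=
    eventually_atTop.2 ⟨14, fun _ => phaseBase_rpow_le_one⟩
  have hlower : ∀ᶠ d : ℕ in atTop, exp (-(3:ℝ) / 2) ≤ phaseBase d ^ (((d:ℝ) - 2) / 2) :=
    eventually_atTop.2 ⟨14, fun _ => exp_neg_three_halves_le_phaseBase_rpow⟩
  exact ⟨le_liminf_of_le (isCoboundedUnder_ge_of_eventually_le _ hupper) hlower,
    14, _, exp_pos _, fun _ => exp_neg_three_halves_le_phaseBase_rpow⟩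
end
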